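/- arXiv:2402.02845 — 2 statements merged into one kernel-verified Lean document; each statement's English description precedes it below -/
import Mathlib

section
/- Let u, v ∈ C²(Ω̄) both solve Δu = Δv = N in Ω, let ū be a constant, and set P = |∇u|²/2 + (ū − u). Then the following pointwise differential identity holds in Ω: (ū−u)ΔP + ⟨(I − ∇²v)∇u, ∇u⟩ = div{ P∇u + (ū−u)∇P + (1/2)|∇u|²∇v − ⟨∇v,∇u⟩∇u + (N−1)(ū−u)∇u − N(ū−u)∇v }. -/
open MeasureTheory Metric Set Bornology
open scoped RealInnerProductSpace

noncomputable section

variable {N : ℕ}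

/-- Second partial derivative `∂_j ∂_i u` at `x`. -/
def hess (u : EuclideanSpace ℝ (Fin N) → ℝ) (x : EuclideanSpace ℝ (Fin N)) (i j : Fin N) : ℝ :=
  fderiv ℝ (fun y => fderiv ℝ u y (EuclideanSpace.single i 1)) x (EuclideanSpace.single j 1)

/-- Squared Frobenius norm of the Hessian of `u` at `x`. -/
def frob2 (u : EuclideanSpace ℝ (Fin N) → ℝ) (x : EuclideanSpace ℝ (Fin N)) : ℝ :=
  ∑ i, ∑ j, (hess u x i j) ^ 2

/-- Laplacian of `u` at `x` (trace of the Hessian). -/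
def lap (u : EuclideanSpace ℝ (Fin N) → ℝ) (x : EuclideanSpace ℝ (Fin N)) : ℝ :=
  ∑ i, hess u x i i

/-- Divergence of a vector field `F` at `x`. -/
def vdiv (F : EuclideanSpace ℝ (Fin N) → EuclideanSpace ℝ (Fin N))
    (x : EuclideanSpace ℝ (Fin N)) : ℝ :=
  ∑ i, fderiv ℝ F x (EuclideanSpace.single i 1) i
local notation "E" => EuclideanSpace ℝ (Fin N)
lemma grad_apply (f : E → ℝ) (y : E) (i : Fin N) :
    gradient f y i = fderiv ℝ f y (EuclideanSpace.single i 1) := by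
  have : gradient f y i = ⟪gradient f y, EuclideanSpace.single i (1:ℝ)⟫ := by
    rw [EuclideanSpace.inner_single_right]; simp
  rw [this, gradient, InnerProductSpace.toDual_symm_apply]

lemma grad_diff {f : E → ℝ} {x : E} {n : ℕ∞} (hf : ContDiffAt ℝ (n+1) f x) :
    ContDiffAt ℝ n (gradient f) x := by
  have h1 : ContDiffAt ℝ n (fderiv ℝ f) x := hf.fderiv_right le_rfl
  exact (InnerProductSpace.toDual ℝ E).symm.toContinuousLinearEquiv.contDiff.contDiffAt.comp x h1

lemma fderiv_grad_apply {f : E → ℝ} {x : E} (hf : DifferentiableAt ℝ (gradient f) x)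
    (w : E) (i : Fin N) :
    fderiv ℝ (gradient f) x w i = fderiv ℝ (fun y => fderiv ℝ f y (EuclideanSpace.single i 1)) x w := by
  have h1 : (fun y => fderiv ℝ f y (EuclideanSpace.single i 1))
      = fun y => (PiLp.proj 2 (fun _ : Fin N => ℝ) i : E →L[ℝ] ℝ) (gradient f y) := by
    funext y; simp [PiLp.proj_apply, grad_apply]
  rw [h1, show (fun y => (PiLp.proj 2 (fun _ : Fin N => ℝ) i : E →L[ℝ] ℝ) (gradient f y))
      = (⇑(PiLp.proj 2 (fun _ : Fin N => ℝ) i : E →L[ℝ] ℝ)) ∘ gradient f from rfl]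
  rw [fderiv_comp x ((PiLp.proj 2 (fun _ : Fin N => ℝ) i : E →L[ℝ] ℝ)).differentiableAt hf]
  rw [ContinuousLinearMap.fderiv]; rfl

lemma pd_fun_eq (f : E → ℝ) (j : Fin N) :
    (fun y => fderiv ℝ f y (EuclideanSpace.single j 1))
      = (⇑(ContinuousLinearMap.apply ℝ ℝ (EuclideanSpace.single (𝕜 := ℝ) j 1))) ∘ fderiv ℝ f := rfl

lemma pd_differentiable {f : E → ℝ} {x : E} (hf : DifferentiableAt ℝ (fderiv ℝ f) x) (j : Fin N) :
    DifferentiableAt ℝ (fun y => fderiv ℝ f y (EuclideanSpace.single j 1)) x := by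
  rw [pd_fun_eq]
  exact ((ContinuousLinearMap.apply ℝ ℝ _).differentiableAt).comp x hf

lemma fderiv_pd {f : E → ℝ} {x : E} (hf : DifferentiableAt ℝ (fderiv ℝ f) x) (j : Fin N) (w : E) :
    fderiv ℝ (fun y => fderiv ℝ f y (EuclideanSpace.single j 1)) x w
      = fderiv ℝ (fderiv ℝ f) x w (EuclideanSpace.single j 1) := by
  rw [pd_fun_eq, fderiv_comp x (ContinuousLinearMap.apply ℝ ℝ _).differentiableAt hf]
  simp [ContinuousLinearMap.fderiv]

lemma fderiv_smul_field {c : E → ℝ} {G : E → E} {x : E}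
    (hc : DifferentiableAt ℝ c x) (hG : DifferentiableAt ℝ G x) (w : E) (i : Fin N) :
    fderiv ℝ (fun y => c y • G y) x w i = c x * fderiv ℝ G x w i + fderiv ℝ c x w * G x i := by
  rw [fderiv_fun_smul hc hG]
  simp [ContinuousLinearMap.add_apply, ContinuousLinearMap.smul_apply,
    ContinuousLinearMap.smulRight_apply]

lemma normsq_grad (f : E → ℝ) (y : E) :
    ‖gradient f y‖ ^ 2 = ∑ j, (fderiv ℝ f y (EuclideanSpace.single j 1)) ^ 2 := by
  rw [← real_inner_self_eq_norm_sq, PiLp.inner_apply]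
  simp [grad_apply, sq]

lemma normsq_half_diff {f : E → ℝ} {x : E} (hf : DifferentiableAt ℝ (fderiv ℝ f) x) :
    DifferentiableAt ℝ (fun y => ‖gradient f y‖ ^ 2 / 2) x := by
  have : (fun y => ‖gradient f y‖ ^ 2 / 2)
      = fun y => (∑ j, (fderiv ℝ f y (EuclideanSpace.single j 1)) ^ 2) / 2 := by
    funext y; rw [normsq_grad]
  rw [this]
  have hs : DifferentiableAt ℝ (fun y => ∑ j, (fderiv ℝ f y (EuclideanSpace.single j 1)) ^ 2) x :=
    DifferentiableAt.fun_sum fun j _ => (pd_differentiable hf j).pow 2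
  simpa [div_eq_mul_inv] using hs.mul_const ((2:ℝ)⁻¹)

lemma fderiv_normsq_half {f : E → ℝ} {x : E} (hf : DifferentiableAt ℝ (fderiv ℝ f) x) (w : E) :
    fderiv ℝ (fun y => ‖gradient f y‖ ^ 2 / 2) x w
      = ∑ j, fderiv ℝ f x (EuclideanSpace.single j 1)
          * fderiv ℝ (fderiv ℝ f) x w (EuclideanSpace.single j 1) := by
  have h1 : (fun y => ‖gradient f y‖ ^ 2 / 2)
      = fun y => (∑ j, (fderiv ℝ f y (EuclideanSpace.single j 1)) ^ 2) / 2 := by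
    funext y; rw [normsq_grad]
  have h2 : (fun y => (∑ j, (fderiv ℝ f y (EuclideanSpace.single j 1)) ^ 2) / 2)
      = fun y => (2:ℝ)⁻¹ * (∑ j, (fderiv ℝ f y (EuclideanSpace.single j 1)) ^ 2) := by
    funext y; ring
  rw [h1, h2, fderiv_const_mul (DifferentiableAt.fun_sum fun j _ => (pd_differentiable hf j).fun_pow 2),
    ContinuousLinearMap.smul_apply,
    fderiv_fun_sum (fun j _ => (pd_differentiable hf j).fun_pow 2)]
  simp only [ContinuousLinearMap.coe_sum', Finset.sum_apply, smul_eq_mul]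
  rw [Finset.mul_sum]
  congr 1; funext j
  have hsq : (fun y => (fderiv ℝ f y (EuclideanSpace.single j 1)) ^ 2)
      = fun y => (fderiv ℝ f y (EuclideanSpace.single j 1)) * (fderiv ℝ f y (EuclideanSpace.single j 1)) := by
    funext y; ring
  rw [hsq, fderiv_fun_mul (pd_differentiable hf j) (pd_differentiable hf j)]
  simp only [ContinuousLinearMap.add_apply, ContinuousLinearMap.coe_smul', Pi.smul_apply,
    smul_eq_mul]
  rw [fderiv_pd hf]
  ring

lemma inner_grad (g f : E → ℝ) (y : E) :
    ⟪gradient g y, gradient f y⟫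
      = ∑ j, fderiv ℝ g y (EuclideanSpace.single j 1) * fderiv ℝ f y (EuclideanSpace.single j 1) := by
  rw [PiLp.inner_apply]
  simp [grad_apply]
  exact Finset.sum_congr rfl fun j _ => mul_comm _ _

lemma inner_grad_diff {g f : E → ℝ} {x : E} (hg : DifferentiableAt ℝ (fderiv ℝ g) x)
    (hf : DifferentiableAt ℝ (fderiv ℝ f) x) :
    DifferentiableAt ℝ (fun y => ⟪gradient g y, gradient f y⟫) x := by
  have h1 : (fun y => ⟪gradient g y, gradient f y⟫)
      = fun y => ∑ j, fderiv ℝ g y (EuclideanSpace.single j 1) * fderiv ℝ f y (EuclideanSpace.single j 1) := by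
    funext y; rw [inner_grad]
  rw [h1]
  exact DifferentiableAt.fun_sum fun j _ => (pd_differentiable hg j).mul (pd_differentiable hf j)

lemma fderiv_inner_grad {g f : E → ℝ} {x : E} (hg : DifferentiableAt ℝ (fderiv ℝ g) x)
    (hf : DifferentiableAt ℝ (fderiv ℝ f) x) (w : E) :
    fderiv ℝ (fun y => ⟪gradient g y, gradient f y⟫) x w
      = ∑ j, (fderiv ℝ (fderiv ℝ g) x w (EuclideanSpace.single j 1)
            * fderiv ℝ f x (EuclideanSpace.single j 1)
          + fderiv ℝ g x (EuclideanSpace.single j 1)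
            * fderiv ℝ (fderiv ℝ f) x w (EuclideanSpace.single j 1)) := by
  have h1 : (fun y => ⟪gradient g y, gradient f y⟫)
      = fun y => ∑ j, fderiv ℝ g y (EuclideanSpace.single j 1) * fderiv ℝ f y (EuclideanSpace.single j 1) := by
    funext y; rw [inner_grad]
  rw [h1, fderiv_fun_sum (fun j _ => (pd_differentiable hg j).fun_mul (pd_differentiable hf j))]
  simp only [ContinuousLinearMap.coe_sum', Finset.sum_apply]
  congr 1; funext j
  rw [fderiv_fun_mul (pd_differentiable hg j) (pd_differentiable hf j)]
  simp only [ContinuousLinearMap.add_apply, ContinuousLinearMap.coe_smul', Pi.smul_apply,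
    smul_eq_mul]
  rw [fderiv_pd hg, fderiv_pd hf]
  ring

lemma euclid_decomp (z : E) : z = ∑ j, z j • EuclideanSpace.single (𝕜 := ℝ) j (1:ℝ) := by
  ext i
  have : (∑ j, z j • EuclideanSpace.single (𝕜 := ℝ) j (1:ℝ)) i
      = ∑ j, (z j • EuclideanSpace.single (𝕜 := ℝ) j (1:ℝ)) i := by
    rw [WithLp.ofLp_sum]; exact Finset.sum_apply i Finset.univ _
  rw [this]
  simp [EuclideanSpace.single_apply]

lemma snd_symm {f : E → ℝ} {x : E} (hf : ContDiffAt ℝ 2 f x) (w₁ w₂ : E) :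
    fderiv ℝ (fderiv ℝ f) x w₁ w₂ = fderiv ℝ (fderiv ℝ f) x w₂ w₁ :=
  hf.isSymmSndFDerivAt (by norm_num) w₁ w₂

lemma final_algebra (n : ℕ) (c : ℝ) (a b HP : Fin n → ℝ) (DU DV : Fin n → Fin n → ℝ)
    (hDU : ∑ i, DU i i = (n : ℝ)) (hDV : ∑ i, DV i i = (n : ℝ))
    (hsym : ∀ i j, DU i j = DU j i) :
    c * (∑ i, HP i) + ((∑ j, a j ^ 2) - ∑ i, (∑ j, a j * DV j i) * a i)
      = ∑ i, (((∑ j, a j ^ 2) / 2 + c) * DU i i + (∑ j, a j * DU i j - a i) * a i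
        + (c * HP i + (- a i) * (∑ j, a j * DU i j - a i))
        + (((∑ j, a j ^ 2) / 2) * DV i i + (∑ j, a j * DU i j) * b i)
        - ((∑ j, b j * a j) * DU i i + (∑ j, (DV i j * a j + b j * DU i j)) * a i)
        + (((n : ℝ) - 1) * c * DU i i + ((n : ℝ) - 1) * (- a i) * a i)
        - ((n : ℝ) * c * DV i i + (n : ℝ) * (- a i) * b i)) := by
  have swap1 : ∑ i, (∑ j, a j * DU i j) * b i = ∑ i, (∑ j, b j * DU i j) * a i := by
    simp only [Finset.sum_mul]
    rw [Finset.sum_comm]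
    exact Finset.sum_congr rfl fun i _ => Finset.sum_congr rfl fun j _ => by
      rw [hsym i j]; ring
  have swap2 : ∑ i, (∑ j, DV i j * a j) * a i = ∑ i, (∑ j, a j * DV j i) * a i := by
    simp only [Finset.sum_mul]
    rw [Finset.sum_comm]
    exact Finset.sum_congr rfl fun i _ => Finset.sum_congr rfl fun j _ => by ring
  have expand : ∀ i : Fin n,
      ((∑ j, a j ^ 2) / 2 + c) * DU i i + (∑ j, a j * DU i j - a i) * a i
        + (c * HP i + (- a i) * (∑ j, a j * DU i j - a i))
        + (((∑ j, a j ^ 2) / 2) * DV i i + (∑ j, a j * DU i j) * b i)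
        - ((∑ j, b j * a j) * DU i i + (∑ j, (DV i j * a j + b j * DU i j)) * a i)
        + (((n : ℝ) - 1) * c * DU i i + ((n : ℝ) - 1) * (- a i) * a i)
        - ((n : ℝ) * c * DV i i + (n : ℝ) * (- a i) * b i)
      = ((∑ j, a j ^ 2) / 2 + c + ((n : ℝ) - 1) * c - (∑ j, b j * a j)) * DU i i
        + c * HP i
        + ((∑ j, a j ^ 2) / 2 - (n : ℝ) * c) * DV i i
        + (∑ j, a j * DU i j) * b i
        - (∑ j, DV i j * a j) * a i
        - (∑ j, b j * DU i j) * a i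
        - ((n : ℝ) - 1) * (a i ^ 2) + (n : ℝ) * (a i * b i) := by
    intro i
    rw [Finset.sum_add_distrib, Finset.sum_mul]
    ring
  rw [Finset.sum_congr rfl fun i _ => expand i]
  simp only [Finset.sum_add_distrib, Finset.sum_sub_distrib, ← Finset.sum_mul, ← Finset.mul_sum]
  rw [hDU, hDV, swap1, swap2,
    show (∑ j, b j * a j) = ∑ j, a j * b j from Finset.sum_congr rfl fun j _ => mul_comm _ _]
  ring


/-- the general pointwise differential identity. If `Δu = Δv = N` in `Ω` and
`P = |∇u|²/2 + (ū − u)`, then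
`(ū−u)ΔP + ⟨(I − ∇²v)∇u, ∇u⟩ = div{ P∇u + (ū−u)∇P + (1/2)|∇u|²∇v − ⟨∇v,∇u⟩∇u
    + (N−1)(ū−u)∇u − N(ū−u)∇v }` in `Ω`. -/
theorem fundamental_differential_identity
    (hN : 2 ≤ N) (Ω : Set (EuclideanSpace ℝ (Fin N))) (hΩo : IsOpen Ω)
    (u v : EuclideanSpace ℝ (Fin N) → ℝ)
    (hu : ContDiffOn ℝ 3 u Ω) (hv : ContDiffOn ℝ 3 v Ω)
    (hpu : ∀ x ∈ Ω, lap u x = N) (hpv : ∀ x ∈ Ω, lap v x = N)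
    (ub : ℝ) :
    ∀ x ∈ Ω,
      (ub - u x) * lap (fun y => ‖gradient u y‖ ^ 2 / 2 + (ub - u y)) x
        + (‖gradient u x‖ ^ 2 - ⟪fderiv ℝ (gradient v) x (gradient u x), gradient u x⟫)
      = vdiv (fun y =>
          (‖gradient u y‖ ^ 2 / 2 + (ub - u y)) • gradient u y
          + (ub - u y) • gradient (fun w => ‖gradient u w‖ ^ 2 / 2 + (ub - u w)) y
          + (‖gradient u y‖ ^ 2 / 2) • gradient v y
          - ⟪gradient v y, gradient u y⟫ • gradient u y
          + ((N - 1 : ℝ) * (ub - u y)) • gradient u y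
          - ((N : ℝ) * (ub - u y)) • gradient v y) x := by
  intro x hx
  classical
  have hxn : Ω ∈ nhds x := hΩo.mem_nhds hx
  have hu3 : ContDiffAt ℝ 3 u x := hu.contDiffAt hxn
  have hv3 : ContDiffAt ℝ 3 v x := hv.contDiffAt hxn
  have hu2' : ContDiffAt ℝ 2 (fderiv ℝ u) x := hu3.fderiv_right (by norm_num)
  have hv2' : ContDiffAt ℝ 2 (fderiv ℝ v) x := hv3.fderiv_right (by norm_num)
  have hDu : DifferentiableAt ℝ (fderiv ℝ u) x := hu2'.differentiableAt (by norm_num)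
  have hDv : DifferentiableAt ℝ (fderiv ℝ v) x := hv2'.differentiableAt (by norm_num)
  have hu2 : ContDiffAt ℝ 2 u x := hu3.of_le (by norm_num)
  have hv2 : ContDiffAt ℝ 2 v x := hv3.of_le (by norm_num)
  have hgu2 : ContDiffAt ℝ 2 (gradient u) x := grad_diff (n := 2) (by exact_mod_cast hu3)
  have hgv2 : ContDiffAt ℝ 2 (gradient v) x := grad_diff (n := 2) (by exact_mod_cast hv3)
  have hgu' : DifferentiableAt ℝ (gradient u) x := hgu2.differentiableAt (by norm_num)
  have hgv' : DifferentiableAt ℝ (gradient v) x := hgv2.differentiableAt (by norm_num)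
  set P : EuclideanSpace ℝ (Fin N) → ℝ :=
    fun y => ‖gradient u y‖ ^ 2 / 2 + (ub - u y) with hPdef
  have hP2 : ContDiffAt ℝ 2 P x := by
    have h1 : ContDiffAt ℝ 2 (fun y => ‖gradient u y‖ ^ 2) x := hgu2.norm_sq ℝ
    exact (h1.div_const 2).add (contDiffAt_const.sub hu2)
  have hgP : DifferentiableAt ℝ (gradient P) x := by
    have : ContDiffAt ℝ 1 (gradient P) x := grad_diff (n := 1) (by exact_mod_cast hP2)
    exact this.differentiableAt (by norm_num)
  have hPd : DifferentiableAt ℝ P x := hP2.differentiableAt (by norm_num)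
  have hud : DifferentiableAt ℝ u x := hu3.differentiableAt (by norm_num)
  -- scalar coefficient differentiability
  have d2 : DifferentiableAt ℝ (fun y => ub - u y) x := (differentiableAt_const ub).sub hud
  have d3 : DifferentiableAt ℝ (fun y => ‖gradient u y‖ ^ 2 / 2) x := normsq_half_diff hDu
  have d4 : DifferentiableAt ℝ (fun y => ⟪gradient v y, gradient u y⟫) x :=
    inner_grad_diff hDv hDu
  have d5 : DifferentiableAt ℝ (fun y => (N - 1 : ℝ) * (ub - u y)) x := d2.const_mul _
  have d6 : DifferentiableAt ℝ (fun y => (N : ℝ) * (ub - u y)) x := d2.const_mul _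
  -- vector field differentiability
  have f1 : DifferentiableAt ℝ (fun y => P y • gradient u y) x := hPd.smul hgu'
  have f2 : DifferentiableAt ℝ (fun y => (ub - u y) • gradient P y) x := d2.smul hgP
  have f3 : DifferentiableAt ℝ (fun y => (‖gradient u y‖ ^ 2 / 2) • gradient v y) x :=
    d3.smul hgv'
  have f4 : DifferentiableAt ℝ (fun y => ⟪gradient v y, gradient u y⟫ • gradient u y) x :=
    d4.smul hgu'
  have f5 : DifferentiableAt ℝ (fun y => ((N - 1 : ℝ) * (ub - u y)) • gradient u y) x :=
    d5.smul hgu'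
  have f6 : DifferentiableAt ℝ (fun y => ((N : ℝ) * (ub - u y)) • gradient v y) x :=
    d6.smul hgv'
  -- notation
  have hfP : ∀ i : Fin N, fderiv ℝ P x (EuclideanSpace.single i 1)
      = ∑ j, fderiv ℝ u x (EuclideanSpace.single j 1)
          * fderiv ℝ (fderiv ℝ u) x (EuclideanSpace.single i 1) (EuclideanSpace.single j 1)
        - fderiv ℝ u x (EuclideanSpace.single i 1) := by
    intro i
    rw [hPdef, fderiv_fun_add d3 d2, ContinuousLinearMap.add_apply, fderiv_normsq_half hDu,
      fderiv_const_sub, ContinuousLinearMap.neg_apply]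
    ring
  have h1 : ∀ i : Fin N,
      fderiv ℝ (fun y => (‖gradient u y‖ ^ 2 / 2 + (ub - u y)) • gradient u y) x
          (EuclideanSpace.single i 1) i
      = ((∑ j, fderiv ℝ u x (EuclideanSpace.single j 1) ^ 2) / 2 + (ub - u x))
          * fderiv ℝ (fderiv ℝ u) x (EuclideanSpace.single i 1) (EuclideanSpace.single i 1)
        + (∑ j, fderiv ℝ u x (EuclideanSpace.single j 1)
            * fderiv ℝ (fderiv ℝ u) x (EuclideanSpace.single i 1) (EuclideanSpace.single j 1)
          - fderiv ℝ u x (EuclideanSpace.single i 1)) * fderiv ℝ u x (EuclideanSpace.single i 1) := by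
    intro i
    rw [fderiv_smul_field (d3.fun_add d2) hgu', fderiv_grad_apply hgu', fderiv_pd hDu,
      grad_apply, fderiv_fun_add d3 d2, ContinuousLinearMap.add_apply, fderiv_normsq_half hDu,
      fderiv_const_sub, ContinuousLinearMap.neg_apply, normsq_grad u x]
    ring
  have h2 : ∀ i : Fin N,
      fderiv ℝ (fun y => (ub - u y) • gradient P y) x (EuclideanSpace.single i 1) i
      = (ub - u x) * hess P x i i
        + (- fderiv ℝ u x (EuclideanSpace.single i 1))
          * (∑ j, fderiv ℝ u x (EuclideanSpace.single j 1)
              * fderiv ℝ (fderiv ℝ u) x (EuclideanSpace.single i 1) (EuclideanSpace.single j 1)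
            - fderiv ℝ u x (EuclideanSpace.single i 1)) := by
    intro i
    rw [fderiv_smul_field d2 hgP, fderiv_grad_apply hgP,
      show fderiv ℝ (fun y => fderiv ℝ P y (EuclideanSpace.single i 1)) x
          (EuclideanSpace.single i 1) = hess P x i i from rfl,
      fderiv_const_sub, ContinuousLinearMap.neg_apply, grad_apply, hfP i]
  have h3 : ∀ i : Fin N,
      fderiv ℝ (fun y => (‖gradient u y‖ ^ 2 / 2) • gradient v y) x (EuclideanSpace.single i 1) i
      = ((∑ j, fderiv ℝ u x (EuclideanSpace.single j 1) ^ 2) / 2)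
          * fderiv ℝ (fderiv ℝ v) x (EuclideanSpace.single i 1) (EuclideanSpace.single i 1)
        + (∑ j, fderiv ℝ u x (EuclideanSpace.single j 1)
            * fderiv ℝ (fderiv ℝ u) x (EuclideanSpace.single i 1) (EuclideanSpace.single j 1))
          * fderiv ℝ v x (EuclideanSpace.single i 1) := by
    intro i
    rw [fderiv_smul_field d3 hgv', fderiv_grad_apply hgv', fderiv_pd hDv,
      grad_apply, fderiv_normsq_half hDu, normsq_grad u x]
  have h4 : ∀ i : Fin N,
      fderiv ℝ (fun y => ⟪gradient v y, gradient u y⟫ • gradient u y) x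
          (EuclideanSpace.single i 1) i
      = (∑ j, fderiv ℝ v x (EuclideanSpace.single j 1)
            * fderiv ℝ u x (EuclideanSpace.single j 1))
          * fderiv ℝ (fderiv ℝ u) x (EuclideanSpace.single i 1) (EuclideanSpace.single i 1)
        + (∑ j, (fderiv ℝ (fderiv ℝ v) x (EuclideanSpace.single i 1) (EuclideanSpace.single j 1)
              * fderiv ℝ u x (EuclideanSpace.single j 1)
            + fderiv ℝ v x (EuclideanSpace.single j 1)
              * fderiv ℝ (fderiv ℝ u) x (EuclideanSpace.single i 1) (EuclideanSpace.single j 1)))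
          * fderiv ℝ u x (EuclideanSpace.single i 1) := by
    intro i
    rw [fderiv_smul_field d4 hgu', fderiv_grad_apply hgu', fderiv_pd hDu,
      grad_apply, fderiv_inner_grad hDv hDu, inner_grad v u x]
  have h5 : ∀ i : Fin N,
      fderiv ℝ (fun y => ((N - 1 : ℝ) * (ub - u y)) • gradient u y) x
          (EuclideanSpace.single i 1) i
      = ((N : ℝ) - 1) * (ub - u x)
          * fderiv ℝ (fderiv ℝ u) x (EuclideanSpace.single i 1) (EuclideanSpace.single i 1)
        + ((N : ℝ) - 1) * (- fderiv ℝ u x (EuclideanSpace.single i 1))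
          * fderiv ℝ u x (EuclideanSpace.single i 1) := by
    intro i
    rw [fderiv_smul_field (d2.const_mul _) hgu', fderiv_grad_apply hgu', fderiv_pd hDu,
      grad_apply, fderiv_const_mul d2, ContinuousLinearMap.smul_apply, smul_eq_mul,
      fderiv_const_sub, ContinuousLinearMap.neg_apply]
  have h6 : ∀ i : Fin N,
      fderiv ℝ (fun y => ((N : ℝ) * (ub - u y)) • gradient v y) x
          (EuclideanSpace.single i 1) i
      = (N : ℝ) * (ub - u x)
          * fderiv ℝ (fderiv ℝ v) x (EuclideanSpace.single i 1) (EuclideanSpace.single i 1)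
        + (N : ℝ) * (- fderiv ℝ u x (EuclideanSpace.single i 1))
          * fderiv ℝ v x (EuclideanSpace.single i 1) := by
    intro i
    rw [fderiv_smul_field (d2.const_mul _) hgv', fderiv_grad_apply hgv', fderiv_pd hDv,
      grad_apply, fderiv_const_mul d2, ContinuousLinearMap.smul_apply, smul_eq_mul,
      fderiv_const_sub, ContinuousLinearMap.neg_apply]
  -- split the divergence
  have s1 := f1.fun_add f2
  have s2 := s1.fun_add f3
  have s3 := s2.fun_sub f4
  have s4 := s3.fun_add f5
  have hsplit : ∀ i : Fin N,
      fderiv ℝ (fun y =>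
          (‖gradient u y‖ ^ 2 / 2 + (ub - u y)) • gradient u y
          + (ub - u y) • gradient P y
          + (‖gradient u y‖ ^ 2 / 2) • gradient v y
          - ⟪gradient v y, gradient u y⟫ • gradient u y
          + ((N - 1 : ℝ) * (ub - u y)) • gradient u y
          - ((N : ℝ) * (ub - u y)) • gradient v y) x (EuclideanSpace.single i 1) i
      = fderiv ℝ (fun y => (‖gradient u y‖ ^ 2 / 2 + (ub - u y)) • gradient u y) x
            (EuclideanSpace.single i 1) i
        + fderiv ℝ (fun y => (ub - u y) • gradient P y) x (EuclideanSpace.single i 1) i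
        + fderiv ℝ (fun y => (‖gradient u y‖ ^ 2 / 2) • gradient v y) x
            (EuclideanSpace.single i 1) i
        - fderiv ℝ (fun y => ⟪gradient v y, gradient u y⟫ • gradient u y) x
            (EuclideanSpace.single i 1) i
        + fderiv ℝ (fun y => ((N - 1 : ℝ) * (ub - u y)) • gradient u y) x
            (EuclideanSpace.single i 1) i
        - fderiv ℝ (fun y => ((N : ℝ) * (ub - u y)) • gradient v y) x
            (EuclideanSpace.single i 1) i := by
    intro i
    rw [fderiv_fun_sub s4 f6, fderiv_fun_add s3 f5, fderiv_fun_sub s2 f4, fderiv_fun_add s1 f3,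
      fderiv_fun_add f1 f2]
    simp only [ContinuousLinearMap.add_apply, ContinuousLinearMap.sub_apply,
      PiLp.add_apply, PiLp.sub_apply]
    rfl
  -- Laplacian facts
  have hDuN : ∑ i, fderiv ℝ (fderiv ℝ u) x (EuclideanSpace.single i 1)
      (EuclideanSpace.single i 1) = (N : ℝ) := by
    have h := hpu x hx
    rw [lap] at h
    rw [← h]
    exact Finset.sum_congr rfl fun i _ => (fderiv_pd hDu i _).symm
  have hDvN : ∑ i, fderiv ℝ (fderiv ℝ v) x (EuclideanSpace.single i 1)
      (EuclideanSpace.single i 1) = (N : ℝ) := by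
    have h := hpv x hx
    rw [lap] at h
    rw [← h]
    exact Finset.sum_congr rfl fun i _ => (fderiv_pd hDv i _).symm
  have hsymU : ∀ i j : Fin N,
      fderiv ℝ (fderiv ℝ u) x (EuclideanSpace.single i 1) (EuclideanSpace.single j 1)
        = fderiv ℝ (fderiv ℝ u) x (EuclideanSpace.single j 1) (EuclideanSpace.single i 1) :=
    fun i j => snd_symm hu2 _ _
  -- the inner product term on the left
  have hinner : ⟪fderiv ℝ (gradient v) x (gradient u x), gradient u x⟫
      = ∑ i, (∑ j, fderiv ℝ u x (EuclideanSpace.single j 1)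
          * fderiv ℝ (fderiv ℝ v) x (EuclideanSpace.single j 1) (EuclideanSpace.single i 1))
          * fderiv ℝ u x (EuclideanSpace.single i 1) := by
    rw [PiLp.inner_apply]
    refine Finset.sum_congr rfl fun i _ => ?_
    rw [RCLike.inner_apply, conj_trivial, fderiv_grad_apply hgv', fderiv_pd hDv, grad_apply]
    rw [mul_comm (fderiv ℝ u x (EuclideanSpace.single i 1))]
    congr 1
    rw [show gradient u x = ∑ j, gradient u x j • EuclideanSpace.single (𝕜 := ℝ) j (1:ℝ) from
      euclid_decomp _, map_sum, ContinuousLinearMap.sum_apply]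
    refine Finset.sum_congr rfl fun j _ => ?_
    rw [_root_.map_smul, ContinuousLinearMap.smul_apply, smul_eq_mul, grad_apply]
  -- assemble
  rw [lap, normsq_grad u x, hinner, vdiv]
  refine Eq.trans (final_algebra N (ub - u x)
    (fun i => fderiv ℝ u x (EuclideanSpace.single i 1))
    (fun i => fderiv ℝ v x (EuclideanSpace.single i 1))
    (fun i => hess P x i i)
    (fun i j => fderiv ℝ (fderiv ℝ u) x (EuclideanSpace.single i 1) (EuclideanSpace.single j 1))
    (fun i j => fderiv ℝ (fderiv ℝ v) x (EuclideanSpace.single i 1) (EuclideanSpace.single j 1))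
    hDuN hDvN hsymU) ?_
  refine Finset.sum_congr rfl fun i _ => ?_
  rw [hsplit i, h1 i, h2 i, h3 i, h4 i, h5 i, h6 i]
end
end

section
/- Comparison lemma: if u ∈ C²(Ω̄) solves Δu = N in a bounded domain Ω and ū = max_{Ω̄} u, then ū − u(x) ≥ (1/2) dist(x, ∂Ω)² for every x ∈ Ω̄. -/
open MeasureTheory Metric Set Bornology
open scoped RealInnerProductSpace
open Filter
open scoped Topology

noncomputable section

variable {N : ℕ}

lemma secondDirDeriv_nonpos {E : Type*} [NormedAddCommGroup E] [NormedSpace ℝ E]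
    (f : E → ℝ) (z v : E) (hf : ContDiffAt ℝ 2 f z) (hmax : IsLocalMax f z) :
    fderiv ℝ (fun y => fderiv ℝ f y v) z v ≤ 0 := by
  by_contra hA
  push_neg at hA
  set A := fderiv ℝ (fun y => fderiv ℝ f y v) z v with hAdef
  -- open set where f is C²
  obtain ⟨U, hUnhds, hfU⟩ := hf.contDiffOn le_rfl (by simp)
  obtain ⟨V, hVU, hVo, hzV⟩ := _root_.mem_nhds_iff.1 hUnhds
  have hfV : ContDiffOn ℝ 2 f V := hfU.mono hVU
  set L : ℝ → E := fun t => z + t • v with hL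
  have hL0 : L 0 = z := by simp [hL]
  have hLd : ∀ t : ℝ, HasDerivAt L v t := fun t => by
    simpa [hL] using ((hasDerivAt_id t).smul_const v).const_add z
  set φ : ℝ → ℝ := fun t => f (L t) with hφ
  set ψ : ℝ → ℝ := fun t => fderiv ℝ f (L t) v with hψ
  -- φ has derivative ψ t whenever L t ∈ V
  have hφd : ∀ t : ℝ, L t ∈ V → HasDerivAt φ (ψ t) t := by
    intro t ht
    have hdf : DifferentiableAt ℝ f (L t) :=
      (hfV.contDiffAt (hVo.mem_nhds ht)).differentiableAt (by norm_num)
    exact hdf.hasFDerivAt.comp_hasDerivAt t (hLd t)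
  -- ψ has derivative A at 0
  have hd1 : DifferentiableAt ℝ (fun y => fderiv ℝ f y v) z := by
    have h1 : ContDiffAt ℝ 1 (fderiv ℝ f) z := hf.fderiv_right (le_refl 2)
    exact (h1.differentiableAt one_ne_zero).clm_apply (differentiableAt_const v)
  have hψd : HasDerivAt ψ A 0 := by
    have h0 : HasFDerivAt (fun y => fderiv ℝ f y v)
        (fderiv ℝ (fun y => fderiv ℝ f y v) z) (L 0) := by
      rw [hL0]; exact hd1.hasFDerivAt
    exact h0.comp_hasDerivAt 0 (hLd 0)
  -- local max at 0
  have hcL : Tendsto L (𝓝 0) (𝓝 z) := by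
    have := (hLd 0).continuousAt.tendsto
    rwa [hL0] at this
  have hφmax : IsLocalMax φ 0 := by
    have h := hcL.eventually hmax
    exact h.mono fun t ht => by simpa [hφ, hL0] using ht
  have hψ0 : ψ 0 = 0 := by
    have h1 := (hφd 0 (hL0 ▸ hzV)).deriv
    rw [hφmax.deriv_eq_zero] at h1
    exact h1.symm
  -- ψ positive to the right of 0
  have hslope : Tendsto (slope ψ 0) (𝓝[≠] 0) (𝓝 A) :=
    hasDerivAt_iff_tendsto_slope.1 hψd
  have hpos : ∀ᶠ t in 𝓝[>] (0:ℝ), 0 < ψ t := by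
    have h1 : ∀ᶠ t in 𝓝[≠] (0:ℝ), 0 < slope ψ 0 t :=
      hslope.eventually (eventually_gt_nhds hA)
    have h2 : ∀ᶠ t in 𝓝[>] (0:ℝ), 0 < slope ψ 0 t :=
      h1.filter_mono (nhdsWithin_mono _ (fun t ht => ne_of_gt ht))
    filter_upwards [h2, self_mem_nhdsWithin] with t ht ht0
    have hts : slope ψ 0 t = ψ t / t := by
      simp [slope, hψ0, div_eq_inv_mul]
    rw [hts] at ht
    have h3 : (0:ℝ) < ψ t / t * t := mul_pos ht ht0
    rwa [div_mul_cancel₀ _ (ne_of_gt (mem_Ioi.1 ht0))] at h3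
  -- combine neighborhoods
  have hVmem : ∀ᶠ t in 𝓝 (0:ℝ), L t ∈ V := hcL (hVo.mem_nhds hzV)
  have hφle : ∀ᶠ t in 𝓝 (0:ℝ), φ t ≤ φ 0 := hφmax
  have hposn : ∀ᶠ t in 𝓝 (0:ℝ), t ∈ Ioi (0:ℝ) → 0 < ψ t :=
    eventually_nhdsWithin_iff.1 hpos
  obtain ⟨δ, hδpos, hδ⟩ := Metric.eventually_nhds_iff.1 ((hVmem.and hφle).and hposn)
  set r := δ / 2 with hr
  have hrpos : 0 < r := by positivity
  have hmem : ∀ t ∈ Icc (0:ℝ) r, dist t (0:ℝ) < δ := by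
    intro t ht
    rw [Real.dist_eq, sub_zero, abs_of_nonneg ht.1]
    have := ht.2
    simp only [hr] at this ⊢
    linarith
  have hmono : StrictMonoOn φ (Icc (0:ℝ) r) := by
    apply strictMonoOn_of_deriv_pos (convex_Icc _ _)
    · intro t ht
      exact ((hφd t ((hδ (hmem t ht)).1.1)).continuousAt).continuousWithinAt
    · intro t ht
      rw [interior_Icc] at ht
      have h1 := hδ (hmem t ⟨le_of_lt ht.1, le_of_lt ht.2⟩)
      rw [(hφd t h1.1.1).deriv]
      exact h1.2 ht.1
  have h1 : φ 0 < φ r := hmono (left_mem_Icc.2 (le_of_lt hrpos)) (right_mem_Icc.2 (le_of_lt hrpos)) hrpos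
  have h2 : φ r ≤ φ 0 := (hδ (hmem r (right_mem_Icc.2 (le_of_lt hrpos)))).1.2
  linarith

lemma key_eps
    (Ω : Set (EuclideanSpace ℝ (Fin N)))
    (hΩo : IsOpen Ω) (hΩb : IsBounded Ω) (hΩne : Ω.Nonempty)
    (u : EuclideanSpace ℝ (Fin N) → ℝ) (hu : ContDiffOn ℝ 2 u (closure Ω))
    (hpois : ∀ x ∈ Ω, lap u x = N)
    (ub : ℝ) (hub : IsGreatest (u '' closure Ω) ub)
    (hN : 0 < N)
    (x : EuclideanSpace ℝ (Fin N)) (hxΩ : x ∈ Ω)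
    (c : ℝ) (hc : 0 < c) (hc2 : 2 * c < 1) :
    c * (infDist x (frontier Ω)) ^ 2 ≤ ub - u x := by
  set e : Fin N → EuclideanSpace ℝ (Fin N) := fun i => EuclideanSpace.single i 1 with he
  set d := infDist x (frontier Ω) with hd
  set q : EuclideanSpace ℝ (Fin N) → ℝ := fun y => ∑ i, (y i - x i) ^ 2 with hqdef
  set g : EuclideanSpace ℝ (Fin N) → ℝ := fun y => u y - c * q y with hgdef
  set Dq : EuclideanSpace ℝ (Fin N) → (EuclideanSpace ℝ (Fin N) →L[ℝ] ℝ) :=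
    fun y => ∑ i, (2 * (y i - x i)) • (EuclideanSpace.proj i : EuclideanSpace ℝ (Fin N) →L[ℝ] ℝ) with hDqdef
  have hqd : ∀ y : EuclideanSpace ℝ (Fin N), HasFDerivAt q (Dq y) y := by
    intro y
    refine HasFDerivAt.fun_sum fun i _ => ?_
    have h1 : HasFDerivAt (fun y : EuclideanSpace ℝ (Fin N) => y i - x i)
        (EuclideanSpace.proj i : EuclideanSpace ℝ (Fin N) →L[ℝ] ℝ) y :=
      (EuclideanSpace.proj i : EuclideanSpace ℝ (Fin N) →L[ℝ] ℝ).hasFDerivAt.sub_const _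
    have h2 := h1.mul h1
    have h3 : (fun y : EuclideanSpace ℝ (Fin N) => (y i - x i) ^ 2) = fun y : EuclideanSpace ℝ (Fin N) => (y i - x i) * (y i - x i) := by
      funext w; ring
    rw [h3, show (2 * (y i - x i)) • (EuclideanSpace.proj i : EuclideanSpace ℝ (Fin N) →L[ℝ] ℝ)
      = (y i - x i) • (EuclideanSpace.proj i : EuclideanSpace ℝ (Fin N) →L[ℝ] ℝ)
        + (y i - x i) • (EuclideanSpace.proj i : EuclideanSpace ℝ (Fin N) →L[ℝ] ℝ) by rw [two_mul, add_smul]]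
    exact h2
  have hDq_apply : ∀ (y : EuclideanSpace ℝ (Fin N)) (j : Fin N), Dq y (e j) = 2 * (y j - x j) := by
    intro y j
    simp [hDqdef, he, PiLp.proj_apply, EuclideanSpace.single_apply, Finset.sum_ite_eq,
      Finset.sum_ite_eq', mul_ite, mul_one, mul_zero]
  have hqC : ContDiff ℝ 2 q := by
    refine ContDiff.sum fun i _ => ?_
    exact ((EuclideanSpace.proj i : EuclideanSpace ℝ (Fin N) →L[ℝ] ℝ).contDiff.sub contDiff_const).pow 2
  have huC2 : ∀ w ∈ Ω, ContDiffAt ℝ 2 u w := fun w hw =>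
    (hu.mono (subset_closure (s := Ω))).contDiffAt (hΩo.mem_nhds hw)
  -- maximum of g on the compact closure
  have hcomp : IsCompact (closure Ω) := hΩb.isCompact_closure
  have hgc : ContinuousOn g (closure Ω) := by
    refine ContinuousOn.sub hu.continuousOn ?_
    exact (continuous_const.mul hqC.continuous).continuousOn
  obtain ⟨z, hzcl, hzmax⟩ :=
    hcomp.exists_isMaxOn (hΩne.mono subset_closure) hgc
  -- z is not interior
  have hzΩ : z ∉ Ω := by
    intro hzΩ
    have hloc : IsLocalMax g z := by
      filter_upwards [hΩo.mem_nhds hzΩ] with y hy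
      exact hzmax (subset_closure hy)
    have hgC2 : ContDiffAt ℝ 2 g z :=
      (huC2 z hzΩ).sub ((contDiff_const.mul hqC).contDiffAt)
    have hhess : ∀ i : Fin N, hess g z i i = hess u z i i - c * 2 := by
      intro i
      have hev : (fun y => fderiv ℝ g y (e i)) =ᶠ[𝓝 z]
          fun y => fderiv ℝ u y (e i) - c * (2 * (y i - x i)) := by
        filter_upwards [hΩo.mem_nhds hzΩ] with y hy
        have hud : DifferentiableAt ℝ u y := (huC2 y hy).differentiableAt (by norm_num)
        have hgd : HasFDerivAt g (fderiv ℝ u y - c • Dq y) y :=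
          hud.hasFDerivAt.sub ((hqd y).const_mul c)
        rw [hgd.fderiv]
        simp [hDq_apply y i]
      have hd1 : DifferentiableAt ℝ (fun y => fderiv ℝ u y (e i)) z := by
        have h1 : ContDiffAt ℝ 1 (fderiv ℝ u) z := (huC2 z hzΩ).fderiv_right (le_refl 2)
        exact (h1.differentiableAt one_ne_zero).clm_apply (differentiableAt_const _)
      have hd2 : HasFDerivAt (fun y : EuclideanSpace ℝ (Fin N) => c * (2 * (y i - x i)))
          ((c * 2) • (EuclideanSpace.proj i : EuclideanSpace ℝ (Fin N) →L[ℝ] ℝ)) z := by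
        have h1 : HasFDerivAt (fun y : EuclideanSpace ℝ (Fin N) => y i - x i)
            (EuclideanSpace.proj i : EuclideanSpace ℝ (Fin N) →L[ℝ] ℝ) z :=
          (EuclideanSpace.proj i : EuclideanSpace ℝ (Fin N) →L[ℝ] ℝ).hasFDerivAt.sub_const _
        have h2 := (h1.const_mul 2).const_mul c
        simpa [smul_smul, mul_comm, mul_assoc] using h2
      have : hess g z i i
          = fderiv ℝ (fun y => fderiv ℝ u y (e i) - c * (2 * (y i - x i))) z (e i) := by
        unfold hess
        rw [hev.fderiv_eq]
      rw [this, fderiv_fun_sub hd1 hd2.differentiableAt]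
      rw [hd2.fderiv]
      simp only [ContinuousLinearMap.coe_sub', Pi.sub_apply, ContinuousLinearMap.coe_smul',
        Pi.smul_apply, PiLp.proj_apply, he, EuclideanSpace.single_apply,
        smul_eq_mul]
      simp [hess]
    have hnonpos : ∀ i : Fin N, hess g z i i ≤ 0 := by
      intro i
      exact secondDirDeriv_nonpos g z (e i) hgC2 hloc
    have hsum_le : ∑ i, hess g z i i ≤ 0 :=
      Finset.sum_nonpos fun i _ => hnonpos i
    have hsum_eq : ∑ i, hess g z i i = (1 - 2 * c) * N := by
      have : ∑ i, hess g z i i = (∑ i, hess u z i i) - N * (c * 2) := by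
        rw [Finset.sum_congr rfl fun i _ => hhess i, Finset.sum_sub_distrib]
        simp [Finset.sum_const, Finset.card_univ, nsmul_eq_mul]
      rw [this]
      have := hpois z hzΩ
      unfold lap at this
      rw [this]; ring
    rw [hsum_eq] at hsum_le
    have : (0:ℝ) < (1 - 2 * c) * N := by
      apply mul_pos (by linarith)
      exact_mod_cast hN
    linarith
  -- z is on the frontier
  have hzfr : z ∈ frontier Ω := by
    rw [hΩo.frontier_eq]
    exact ⟨hzcl, hzΩ⟩
  -- distance bound
  have hdz : d ≤ dist z x := by
    rw [dist_comm]
    exact infDist_le_dist_of_mem hzfr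
  have hqz : q z = dist z x ^ 2 := by
    rw [EuclideanSpace.dist_eq, Real.sq_sqrt (by positivity)]
    simp [hqdef, Real.dist_eq, sq_abs]
  have hqx : q x = 0 := by simp [hqdef]
  have huz : u z ≤ ub := hub.2 ⟨z, hzcl, rfl⟩
  have hgxz : g x ≤ g z := hzmax (subset_closure hxΩ)
  have hd0 : 0 ≤ d := infDist_nonneg
  have h1 : c * d ^ 2 ≤ c * q z := by
    rw [hqz]
    apply mul_le_mul_of_nonneg_left _ (le_of_lt hc)
    exact pow_le_pow_left₀ hd0 hdz 2
  simp only [hgdef, hqx, mul_zero, sub_zero] at hgxz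
  linarith

/-- comparison lemma: if `Δu = N` in a bounded domain and `ū = max_Ω̄ u`,
then `ū − u(x) ≥ (1/2) dist(x, ∂Ω)²` on `Ω̄`. -/
theorem comparison_dist_sq
    (Ω : Set (EuclideanSpace ℝ (Fin N)))
    (hΩo : IsOpen Ω) (hΩb : IsBounded Ω) (hΩne : Ω.Nonempty)
    (u : EuclideanSpace ℝ (Fin N) → ℝ) (hu : ContDiffOn ℝ 2 u (closure Ω))
    (hpois : ∀ x ∈ Ω, lap u x = N)
    (ub : ℝ) (hub : IsGreatest (u '' closure Ω) ub) :
    ∀ x ∈ closure Ω, (1 / 2) * (infDist x (frontier Ω)) ^ 2 ≤ ub - u x := by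
  intro x hx
  have hux : u x ≤ ub := hub.2 ⟨x, hx, rfl⟩
  by_cases hxΩ : x ∈ Ω
  · by_cases hfr : frontier Ω = ∅
    · rw [hfr, infDist_empty]
      norm_num
      linarith
    · have hN : 0 < N := by
        rcases Nat.eq_zero_or_pos N with h0 | hN
        · exfalso
          subst h0
          haveI : Subsingleton (EuclideanSpace ℝ (Fin 0)) :=
            ⟨fun a b => PiLp.ext fun i => i.elim0⟩
          obtain ⟨p, hp⟩ := hΩne
          have huniv : Ω = univ := eq_univ_of_forall fun y => by
            rwa [Subsingleton.elim y p]
          rw [huniv, frontier_univ] at hfr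
          exact hfr rfl
        · exact hN
      set d := infDist x (frontier Ω) with hd
      have key : ∀ c ∈ Ioo (0:ℝ) (1/2), c * d ^ 2 ≤ ub - u x := fun c hc =>
        key_eps Ω hΩo hΩb hΩne u hu hpois ub hub hN x hxΩ c hc.1 (by
          have := hc.2; linarith)
      have hlim : Filter.Tendsto (fun c : ℝ => c * d ^ 2) (nhdsWithin (1/2) (Iio (1/2)))
          (nhds ((1/2) * d ^ 2)) :=
        ((continuous_id.mul continuous_const).tendsto _).mono_left nhdsWithin_le_nhds
      refine le_of_tendsto hlim ?_
      filter_upwards [Ioo_mem_nhdsLT_of_mem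
        (show (1/2:ℝ) ∈ Ioc 0 (1/2) by norm_num)] with c hc
      exact key c hc
  · have hxfr : x ∈ frontier Ω := by
      rw [hΩo.frontier_eq]; exact ⟨hx, hxΩ⟩
    rw [infDist_zero_of_mem hxfr]
    norm_num
    linarith
end
end
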